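/- arXiv:2409.17662 — 2 statements merged into one kernel-verified Lean document; each statement's English description precedes it below -/
import Mathlib

section
/- For m ≥ 4, the QE constant of the crown graph K_{m,m}^m equals m − 4. -/
/-! For `f ⊥ 𝟙` put `d i = f (u i) - f (v i)`. The distance matrix is `2J - 2I` within each side
and `J + 2I` between the sides, so `fᵀ D f = (∑ d i)² / 2 - 2 ∑ (d i)²`. Cauchy–Schwarz gives
`(∑ d i)² ≤ m ∑ (d i)²`, and `∑ (d i)² ≤ 2 ‖f‖² = 2`, hence `fᵀ D f ≤ (m - 4) / 2 · ∑ (d i)² ≤ m - 4`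
once `m ≥ 4`; equality holds for `f = ±1/√(2m)` on the two sides. -/

/-- The almost complete bipartite graph `K_{m,n}^t`: the complete bipartite graph on
parts `Fin m` and `Fin n`, with the `t` disjoint edges `{u_i, v_i}`, `i < t`, removed. -/
def Kmnt (m n t : ℕ) : SimpleGraph (Fin m ⊕ Fin n) :=
  SimpleGraph.fromRel (fun x y =>
    match x, y with
    | Sum.inl i, Sum.inr j => ¬((i : ℕ) = (j : ℕ) ∧ (i : ℕ) < t)
    | _, _ => False)

open Finset SimpleGraph

namespace SimpleGraph

variable {V : Type*} {G : SimpleGraph V} {u v w x : V}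

lemma dist_eq_two_of_adj_of_adj (hne : u ≠ v) (huv : ¬G.Adj u v) (huw : G.Adj u w)
    (hwv : G.Adj w v) : G.dist u v = 2 := by
  have h : G.edist u v = 2 := edist_eq_two_iff.mpr ⟨hne, huv, w, huw, hwv.symm⟩
  simp [dist, h]

lemma dist_eq_three_of_adj_of_adj_of_adj (hne : u ≠ v) (huv : ¬G.Adj u v)
    (hcommon : G.commonNeighbors u v = ∅) (huw : G.Adj u w) (hwx : G.Adj w x)
    (hxv : G.Adj x v) : G.dist u v = 3 := by
  have hlt : 2 < G.edist u v := two_lt_edist_iff.mpr ⟨hne, huv, hcommon⟩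
  have hle : G.edist u v ≤ 3 := (Walk.cons huw (.cons hwx (.cons hxv .nil))).edist_le
  have h : G.edist u v = 3 := le_antisymm hle (Order.add_one_le_of_lt hlt)
  simp [dist, h]

end SimpleGraph

lemma Finset.sum_sum_ite_eq_mul_mul {ι R : Type*} [Fintype ι] [DecidableEq ι] [CommRing R]
    (u v : R) (c d : ι → R) :
    ∑ i, ∑ j, (if i = j then u else v) * c i * d j
      = v * (∑ i, c i) * (∑ j, d j) + (u - v) * ∑ i, c i * d i := by
  have h : ∀ i j, (if i = j then u else v) * c i * d j
      = v * (c i * d j) + if i = j then (u - v) * (c i * d i) else 0 := by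
    intro i j
    split_ifs with hij
    · subst hij; ring
    · ring
  simp only [h, sum_add_distrib, sum_ite_eq, mem_univ, if_true, ← mul_sum, ← sum_mul]
  ring

lemma Fin.exists_ne_ne_of_three_le {m : ℕ} (hm : 3 ≤ m) (i j : Fin m) : ∃ k, k ≠ i ∧ k ≠ j :=
  ENat.exists_ne_ne_of_three_le (by simpa using hm) i j

namespace Kmnt

variable {m n t : ℕ}

lemma adj_inl_inr_iff (i : Fin m) (j : Fin n) :
    (Kmnt m n t).Adj (.inl i) (.inr j) ↔ ¬((i : ℕ) = j ∧ (i : ℕ) < t) := by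
  simp [Kmnt, fromRel_adj]

lemma not_adj_inl_inl (i j : Fin m) : ¬(Kmnt m n t).Adj (.inl i) (.inl j) := by
  simp [Kmnt, fromRel_adj]

lemma not_adj_inr_inr (i j : Fin n) : ¬(Kmnt m n t).Adj (.inr i) (.inr j) := by
  simp [Kmnt, fromRel_adj]

lemma crown_adj_inl_inr_iff (i j : Fin m) : (Kmnt m m m).Adj (.inl i) (.inr j) ↔ i ≠ j := by
  simp [adj_inl_inr_iff, Fin.ext_iff]

lemma crown_adj_inr_inl_iff (i j : Fin m) : (Kmnt m m m).Adj (.inr i) (.inl j) ↔ i ≠ j := by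
  rw [adj_comm, crown_adj_inl_inr_iff, ne_comm]

lemma crown_dist_inl_inl (hm : 3 ≤ m) (i j : Fin m) :
    (Kmnt m m m).dist (.inl i) (.inl j) = if i = j then 0 else 2 := by
  split_ifs with h
  · simp [h]
  obtain ⟨k, hki, hkj⟩ := Fin.exists_ne_ne_of_three_le hm i j
  exact dist_eq_two_of_adj_of_adj (by simpa using h) (not_adj_inl_inl i j)
    ((crown_adj_inl_inr_iff i k).mpr hki.symm) ((crown_adj_inr_inl_iff k j).mpr hkj)

lemma crown_dist_inr_inr (hm : 3 ≤ m) (i j : Fin m) :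
    (Kmnt m m m).dist (.inr i) (.inr j) = if i = j then 0 else 2 := by
  split_ifs with h
  · simp [h]
  obtain ⟨k, hki, hkj⟩ := Fin.exists_ne_ne_of_three_le hm i j
  exact dist_eq_two_of_adj_of_adj (by simpa using h) (not_adj_inr_inr i j)
    ((crown_adj_inr_inl_iff i k).mpr hki.symm) ((crown_adj_inl_inr_iff k j).mpr hkj)

lemma crown_commonNeighbors_inl_inr (i j : Fin m) :
    (Kmnt m m m).commonNeighbors (.inl i) (.inr j) = ∅ := by
  ext (k | k) <;> simp [mem_commonNeighbors, not_adj_inl_inl, not_adj_inr_inr]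

lemma crown_dist_inl_inr (hm : 3 ≤ m) (i j : Fin m) :
    (Kmnt m m m).dist (.inl i) (.inr j) = if i = j then 3 else 1 := by
  split_ifs with h
  · subst h
    obtain ⟨j, hji, -⟩ := Fin.exists_ne_ne_of_three_le hm i i
    obtain ⟨k, hki, hkj⟩ := Fin.exists_ne_ne_of_three_le hm i j
    exact dist_eq_three_of_adj_of_adj_of_adj (by simp) (by simp [crown_adj_inl_inr_iff])
      (crown_commonNeighbors_inl_inr i i) ((crown_adj_inl_inr_iff i j).mpr hji.symm)
      ((crown_adj_inr_inl_iff j k).mpr hkj.symm) ((crown_adj_inl_inr_iff k i).mpr hki)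
  · exact dist_eq_one_iff_adj.mpr ((crown_adj_inl_inr_iff i j).mpr h)

lemma crown_dist_inr_inl (hm : 3 ≤ m) (i j : Fin m) :
    (Kmnt m m m).dist (.inr i) (.inl j) = if i = j then 3 else 1 := by
  rw [dist_comm, crown_dist_inl_inr hm]
  exact if_congr eq_comm rfl rfl

lemma crown_sum_sum_dist_mul_mul_eq (hm : 3 ≤ m) (f : Fin m ⊕ Fin m → ℝ) (hf : ∑ x, f x = 0) :
    ∑ x, ∑ y, ((Kmnt m m m).dist x y : ℝ) * f x * f y
      = (∑ i, (f (.inl i) - f (.inr i))) ^ 2 / 2 - 2 * ∑ i, (f (.inl i) - f (.inr i)) ^ 2 := by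
  have hcomm : ∑ i, f (.inr i) * f (.inl i) = ∑ i, f (.inl i) * f (.inr i) :=
    sum_congr rfl fun i _ => mul_comm _ _
  have hdiff : ∑ i, (f (.inl i) - f (.inr i)) ^ 2 = ∑ i, f (.inl i) * f (.inl i)
      + ∑ i, f (.inr i) * f (.inr i) - 2 * ∑ i, f (.inl i) * f (.inr i) := by
    rw [← sum_add_distrib, mul_sum, ← sum_sub_distrib]
    exact sum_congr rfl fun i _ => by ring
  simp only [Fintype.sum_sum_type, sum_add_distrib, crown_dist_inl_inl hm,
    crown_dist_inl_inr hm, crown_dist_inr_inl hm, crown_dist_inr_inr hm, Nat.cast_ite,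
    sum_sum_ite_eq_mul_mul, hcomm] at hf ⊢
  rw [sum_sub_distrib, hdiff]
  linear_combination (3 / 2 * (∑ i, f (.inl i) + ∑ i, f (.inr i))) * hf

end Kmnt

/-- QEC of the crown graph K_{m,m}^m equals m − 4 for m ≥ 4. -/
theorem stmt3 (m : ℕ) (hm : 4 ≤ m) :
    IsGreatest {r : ℝ | ∃ f : Fin m ⊕ Fin m → ℝ,
        (∑ x, f x ^ 2) = 1 ∧ (∑ x, f x) = 0 ∧
        r = ∑ x, ∑ y, ((Kmnt m m m).dist x y : ℝ) * f x * f y}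
      ((m : ℝ) - 4) := by
  have hm3 : 3 ≤ m := by omega
  have hm4 : (4 : ℝ) ≤ m := by exact_mod_cast hm
  refine ⟨?_, ?_⟩
  · set c := √(1 / (2 * m))
    have hc : (m : ℝ) * c ^ 2 = 1 / 2 := by
      rw [Real.sq_sqrt (by positivity)]
      field_simp
    have hsum : ∑ x : Fin m ⊕ Fin m, Sum.elim (fun _ => c) (fun _ => -c) x = 0 := by
      simp [Fintype.sum_sum_type]
    refine ⟨Sum.elim (fun _ => c) (fun _ => -c), ?_, hsum, ?_⟩
    · simp only [Fintype.sum_sum_type, Sum.elim_inl, Sum.elim_inr, sum_const, card_univ,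
        Fintype.card_fin, nsmul_eq_mul, even_two, Even.neg_pow]
      linear_combination 2 * hc
    · rw [Kmnt.crown_sum_sum_dist_mul_mul_eq hm3 _ hsum]
      simp only [Sum.elim_inl, Sum.elim_inr, sub_neg_eq_add, sum_const, card_univ,
        Fintype.card_fin, smul_add, nsmul_eq_mul]
      linear_combination (8 - 2 * m) * hc
  · rintro _ ⟨f, hsq, hsum, rfl⟩
    rw [Kmnt.crown_sum_sum_dist_mul_mul_eq hm3 f hsum]
    set d := fun i => f (.inl i) - f (.inr i)
    have hcs : (∑ i, d i) ^ 2 ≤ m * ∑ i, d i ^ 2 := by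
      simpa using sq_sum_le_card_mul_sum_sq (s := univ) (f := d)
    have hd : ∑ i, d i ^ 2 ≤ 2 := by
      calc ∑ i, d i ^ 2 ≤ ∑ i, 2 * (f (.inl i) ^ 2 + f (.inr i) ^ 2) :=
            sum_le_sum fun i _ => by nlinarith [sq_nonneg (f (.inl i) + f (.inr i))]
        _ = 2 * ∑ x, f x ^ 2 := by rw [Fintype.sum_sum_type, ← sum_add_distrib, mul_sum]
        _ = 2 := by rw [hsq, mul_one]
    calc (∑ i, d i) ^ 2 / 2 - 2 * ∑ i, d i ^ 2 ≤ (m - 4) / 2 * ∑ i, d i ^ 2 := by linarith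
      _ ≤ (m - 4) / 2 * 2 := mul_le_mul_of_nonneg_left hd (by linarith)
      _ = m - 4 := by ring
end

section
/- For every k ≥ 1, the (2k+1)×(2k+1) matrix A_{2k+1} with entries a_{i,j} = min{i, n+1−i} + min{j, n+1−j} − min{|i−j|, n−|i−j|} for n = 2k+1 satisfies A_{2k+1} = J(1, 2k+1) + Σ_{p=1}^{k+1} J(p, p+k) + Σ_{p=2}^{k+1} J(p, p+k−1), and hence is positive semidefinite. -/
open Matrix

/-- The n x n matrix with 1-based entries
a_{i,j} = min(i, n+1-i) + min(j, n+1-j) - min(|i-j|, n-|i-j|).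
Here indices i : Fin n represent the 1-based index i+1. -/
noncomputable def Amat (n : ℕ) : Matrix (Fin n) (Fin n) ℝ := fun i j =>
  min ((i : ℝ) + 1) ((n : ℝ) - i) + min ((j : ℝ) + 1) ((n : ℝ) - j)
    - min |(i : ℝ) - (j : ℝ)| ((n : ℝ) - |(i : ℝ) - (j : ℝ)|)

/-- The n x n matrix J(p,q) (1-based) whose (i,j) entry is 1 if p <= i, j <= q
and 0 otherwise. -/
def Jmat (n p q : ℕ) : Matrix (Fin n) (Fin n) ℝ := fun i j =>
  if p ≤ (i : ℕ) + 1 ∧ (i : ℕ) + 1 ≤ q ∧ p ≤ (j : ℕ) + 1 ∧ (j : ℕ) + 1 ≤ q then 1 else 0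

lemma Jmat_posSemidef (n p q : ℕ) : (Jmat n p q).PosSemidef := by
  set B : Matrix (Fin 1) (Fin n) ℝ := Matrix.of fun _ i =>
      if p ≤ (i : ℕ) + 1 ∧ (i : ℕ) + 1 ≤ q then (1:ℝ) else 0 with hB
  have : Jmat n p q = Bᴴ * B := by
    ext i j
    simp only [Jmat, Matrix.mul_apply, Matrix.conjTranspose_apply, Fin.sum_univ_one, hB,
      Matrix.of_apply, apply_ite (star : ℝ → ℝ), star_one, star_zero]
    split <;> split <;> split <;> simp_all
  rw [this]
  exact Matrix.posSemidef_conjTranspose_mul_self _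

set_option maxHeartbeats 1000000 in
lemma key (k a b : ℕ) (hk : 1 ≤ k) (ha : a < 2*k+1) (hb : b < 2*k+1) :
    min (a+1) (2*k+1-a) + min (b+1) (2*k+1-b)
      = 1 + ((Finset.Icc 1 (k+1)).filter fun p => p ≤ a+1 ∧ a+1 ≤ p+k ∧ p ≤ b+1 ∧ b+1 ≤ p+k).card
        + ((Finset.Icc 2 (k+1)).filter fun p =>
            p ≤ a+1 ∧ a+1 ≤ p+k-1 ∧ p ≤ b+1 ∧ b+1 ≤ p+k-1).card
        + min (max a b - min a b) (2*k+1 - (max a b - min a b)) := by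
  have h1 : ((Finset.Icc 1 (k+1)).filter fun p => p ≤ a+1 ∧ a+1 ≤ p+k ∧ p ≤ b+1 ∧ b+1 ≤ p+k)
      = Finset.Icc (max 1 (max (a+1-k) (b+1-k))) (min (k+1) (min (a+1) (b+1))) := by
    ext p; simp only [Finset.mem_filter, Finset.mem_Icc]; omega
  have h2 : ((Finset.Icc 2 (k+1)).filter fun p =>
        p ≤ a+1 ∧ a+1 ≤ p+k-1 ∧ p ≤ b+1 ∧ b+1 ≤ p+k-1)
      = Finset.Icc (max 2 (max (a+2-k) (b+2-k))) (min (k+1) (min (a+1) (b+1))) := by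
    ext p; simp only [Finset.mem_filter, Finset.mem_Icc]; omega
  rw [h1, h2, Nat.card_Icc, Nat.card_Icc]
  rcases le_total a b with h | h
  · rw [max_eq_right h, min_eq_left h,
      min_eq_left (show a+1 ≤ b+1 by omega),
      max_eq_right (show a+1-k ≤ b+1-k by omega),
      max_eq_right (show a+2-k ≤ b+2-k by omega)]
    omega
  · rw [max_eq_left h, min_eq_right h,
      min_eq_right (show b+1 ≤ a+1 by omega),
      max_eq_left (show b+1-k ≤ a+1-k by omega),
      max_eq_left (show b+2-k ≤ a+2-k by omega)]
    omega

/-- For k >= 1, with n = 2k+1: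
A_{2k+1} = J(1,2k+1) + sum_{p=1}^{k+1} J(p, p+k) + sum_{p=2}^{k+1} J(p, p+k-1),
and A_{2k+1} is positive semidefinite. -/
theorem stmt17 (k : ℕ) (hk : 1 ≤ k) :
    Amat (2 * k + 1) = Jmat (2 * k + 1) 1 (2 * k + 1)
        + ∑ p ∈ Finset.Icc 1 (k + 1), Jmat (2 * k + 1) p (p + k)
        + ∑ p ∈ Finset.Icc 2 (k + 1), Jmat (2 * k + 1) p (p + k - 1) ∧
      (Amat (2 * k + 1)).PosSemidef := by
  have heq : Amat (2 * k + 1) = Jmat (2 * k + 1) 1 (2 * k + 1)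
        + ∑ p ∈ Finset.Icc 1 (k + 1), Jmat (2 * k + 1) p (p + k)
        + ∑ p ∈ Finset.Icc 2 (k + 1), Jmat (2 * k + 1) p (p + k - 1) := by
    ext i j
    obtain ⟨a, ha⟩ := i
    obtain ⟨b, hb⟩ := j
    have hJ1 : Jmat (2 * k + 1) 1 (2 * k + 1) ⟨a, ha⟩ ⟨b, hb⟩ = 1 := by
      simp only [Jmat]
      rw [if_pos]
      exact ⟨by omega, by omega, by omega, by omega⟩
    have hfirst : (∑ p ∈ Finset.Icc 1 (k + 1), Jmat (2 * k + 1) p (p + k)) ⟨a, ha⟩ ⟨b, hb⟩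
        = (((Finset.Icc 1 (k+1)).filter fun p =>
            p ≤ a+1 ∧ a+1 ≤ p+k ∧ p ≤ b+1 ∧ b+1 ≤ p+k).card : ℝ) := by
      simp only [Matrix.sum_apply, Jmat, Finset.sum_boole]
    have hsecond : (∑ p ∈ Finset.Icc 2 (k + 1), Jmat (2 * k + 1) p (p + k - 1)) ⟨a, ha⟩ ⟨b, hb⟩
        = (((Finset.Icc 2 (k+1)).filter fun p =>
            p ≤ a+1 ∧ a+1 ≤ p+k-1 ∧ p ≤ b+1 ∧ b+1 ≤ p+k-1).card : ℝ) := by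
      simp only [Matrix.sum_apply, Jmat, Finset.sum_boole]
    have habs : |(a : ℝ) - (b : ℝ)| = ((max a b - min a b : ℕ) : ℝ) := by
      rcases le_total a b with h | h
      · rw [max_eq_right h, min_eq_left h, abs_sub_comm,
          abs_of_nonneg (sub_nonneg.mpr (show (a:ℝ) ≤ b by exact_mod_cast h)),
          Nat.cast_sub h]
      · rw [max_eq_left h, min_eq_right h,
          abs_of_nonneg (sub_nonneg.mpr (show (b:ℝ) ≤ a by exact_mod_cast h)),
          Nat.cast_sub h]
    have hm1 : min ((a : ℝ) + 1) (((2*k+1 : ℕ) : ℝ) - a) = ((min (a+1) (2*k+1-a) : ℕ) : ℝ) := by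
      rw [Nat.cast_min, Nat.cast_sub (by omega)]; push_cast; ring_nf
    have hm2 : min ((b : ℝ) + 1) (((2*k+1 : ℕ) : ℝ) - b) = ((min (b+1) (2*k+1-b) : ℕ) : ℝ) := by
      rw [Nat.cast_min, Nat.cast_sub (by omega)]; push_cast; ring_nf
    have hd : max a b - min a b < 2*k+1 := by omega
    have hm3 : min |(a:ℝ) - (b:ℝ)| (((2*k+1 : ℕ):ℝ) - |(a:ℝ) - (b:ℝ)|)
        = ((min (max a b - min a b) (2*k+1 - (max a b - min a b)) : ℕ) : ℝ) := by
      rw [habs, Nat.cast_min, Nat.cast_sub hd.le]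
    have hkey := key k a b hk ha hb
    simp only [Amat, Matrix.add_apply, hJ1, hfirst, hsecond]
    rw [hm1, hm2, hm3, sub_eq_iff_eq_add]
    exact_mod_cast hkey
  refine ⟨heq, ?_⟩
  rw [heq]
  refine ((Jmat_posSemidef _ _ _).add ?_).add ?_
  · exact Finset.sum_induction _ _ (fun _ _ h1 h2 => h1.add h2) Matrix.PosSemidef.zero
      fun p _ => Jmat_posSemidef _ _ _
  · exact Finset.sum_induction _ _ (fun _ _ h1 h2 => h1.add h2) Matrix.PosSemidef.zero
      fun p _ => Jmat_posSemidef _ _ _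
end
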